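/- Let F = {f_0,…,f_{N−1}} be a finite family of homeomorphisms of the circle 𝕊¹ (with metric d), μ a probability measure on I = {0,…,N−1} with weights p_0,…,p_{N−1}, and ν a μ-stationary probability measure on 𝕊¹. Suppose there exist α ∈ (0,1), λ ∈ (0,1), c > 0 such that for all x,y ∈ 𝕊¹ and all n ∈ ℕ, ∫ d(X_n^x(i), X_n^y(i))^α dμ^ℕ(i) ≤ c·λ^n. Define (Qφ)(j,x) := Σ_{i∈I} p_i φ(i, f_j(x)) and |φ|_α := sup_{j∈I, x≠y} |φ(j,x) − φ(j,y)| / d(x,y)^α. Then there exists C > 0 such that for every bounded measurable φ : I × 𝕊¹ → ℝ and every n ≥ 1: sup_{(j,y) ∈ I×𝕊¹} | (Q^n φ)(j,y) − ∫ φ d(μ⊗ν) | ≤ C·λ^n·|φ|_α. -/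

import Mathlib

/-! Write `P` for the Markov operator `(P h)(x) = ∑ⱼ pⱼ h (fⱼ x)` and `ψ x = ∑ᵢ pᵢ φ (i, x)`.
Then `Qⁿ⁺¹ φ (j, y) = (Pⁿ ψ)(fⱼ y)`, and stationarity of `ν` gives
`∫ Pⁿ ψ dν = ∫ ψ dν = ∫ φ d(μ ⊗ ν)`. Expanding `Pⁿ` over words of length `n`,
`(Pⁿ ψ)(x) = ∫ ψ (f_iⁿ x) dμ^ℕ(i)`, so the `α`-Hölder bound `K` on `ψ` and the contraction
hypothesis give `|Pⁿ ψ z - Pⁿ ψ x| ≤ K c λⁿ` for all `x, z`; averaging over `x` against `ν`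
yields the claim with `C = c / λ`. -/

open MeasureTheory Topology Filter

noncomputable section

/-- Iteration of the IFS: `ifsIter f i n = f (i (n-1)) ∘ ⋯ ∘ f (i 0)`, i.e. `f_i^n`. -/
def ifsIter {α : Type*} {N : ℕ} (f : Fin N → α → α) (i : ℕ → Fin N) : ℕ → α → α
  | 0, x => x
  | n + 1, x => f (i n) (ifsIter f i n x)

/-- `P` is the Bernoulli product measure `μ^ℕ` on `ℕ → Fin N` with weights `p`. -/
def IsBernoulli {N : ℕ} (p : Fin N → ℝ) (P : Measure (ℕ → Fin N)) : Prop :=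
  IsProbabilityMeasure P ∧
    ∀ (n : ℕ) (w : Fin n → Fin N),
      P {i | ∀ k : Fin n, i (k : ℕ) = w k} = ∏ k : Fin n, ENNReal.ofReal (p (w k))

/-- Hypothesis (H): there is no probability measure invariant under every map of the IFS. -/
def HypH {N : ℕ} (f : Fin N → UnitAddCircle → UnitAddCircle) : Prop :=
  ¬ ∃ m : Measure UnitAddCircle, IsProbabilityMeasure m ∧
      ∀ j : Fin N, Measure.map (f j) m = m

/-- Property (P): proximality. -/
def HypP {N : ℕ} (f : Fin N → UnitAddCircle → UnitAddCircle) : Prop :=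
  ∀ x y : UnitAddCircle, ∃ i : ℕ → Fin N, ∃ φ : ℕ → ℕ, StrictMono φ ∧
    Tendsto (fun k => dist (ifsIter f i (φ k) x) (ifsIter f i (φ k) y)) atTop (𝓝 0)

/-- `ν` is a `μ`-stationary measure for the IFS with probabilities: `ν = Σ_j p_j (f_j)_* ν`. -/
def IFSStationary {N : ℕ} (p : Fin N → ℝ) (f : Fin N → UnitAddCircle → UnitAddCircle)
    (ν : Measure UnitAddCircle) : Prop :=
  ν = ∑ j : Fin N, ENNReal.ofReal (p j) • Measure.map (f j) ν

/-- Hölder continuity of `h`. -/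
def IsHolderFn (h : UnitAddCircle → ℝ) : Prop :=
  ∃ H > (0 : ℝ), ∃ β ∈ Set.Ioc (0 : ℝ) 1, ∀ x y, |h x - h y| ≤ H * dist x y ^ β

/-- `g j` is the modulus of the derivative of `f j`, expressed as a metric derivative. -/
def IsAbsDerivOf {N : ℕ} (f : Fin N → UnitAddCircle → UnitAddCircle)
    (g : Fin N → UnitAddCircle → ℝ) : Prop :=
  ∀ (j : Fin N) (x : UnitAddCircle),
    Tendsto (fun y => dist (f j x) (f j y) / dist x y) (𝓝[≠] x) (𝓝 (g j x))

/-- The Laplace–Markov operator `Q`. -/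
def Qop {N : ℕ} (p : Fin N → ℝ) (f : Fin N → UnitAddCircle → UnitAddCircle)
    (φ : Fin N × UnitAddCircle → ℝ) : Fin N × UnitAddCircle → ℝ :=
  fun z => ∑ i : Fin N, p i * φ (i, f z.1 z.2)

theorem abs_weighted_sum_le {ι : Type*} (s : Finset ι) {p a : ι → ℝ} {M : ℝ}
    (hp : ∀ i ∈ s, 0 ≤ p i) (hpsum : ∑ i ∈ s, p i = 1) (ha : ∀ i ∈ s, |a i| ≤ M) :
    |∑ i ∈ s, p i * a i| ≤ M :=
  calc |∑ i ∈ s, p i * a i| ≤ ∑ i ∈ s, p i * M := by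
        refine (Finset.abs_sum_le_sum_abs _ _).trans (Finset.sum_le_sum fun i hi => ?_)
        rw [abs_mul, abs_of_nonneg (hp i hi)]
        exact mul_le_mul_of_nonneg_left (ha i hi) (hp i hi)
    _ = M := by rw [← Finset.sum_mul, hpsum, one_mul]

section MarkovOperator

variable {ι α : Type*} [Fintype ι] (p : ι → ℝ) (f : ι → α → α)

def markovOp (h : α → ℝ) (x : α) : ℝ :=
  ∑ j, p j * h (f j x)

def wordIter : {n : ℕ} → (Fin n → ι) → α → α
  | 0, _, x => x
  | n + 1, w, x => f (w (Fin.last n)) (wordIter (Fin.init w) x)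

theorem markovOp_iterate_eq_sum (n : ℕ) (h : α → ℝ) (x : α) :
    (markovOp p f)^[n] h x = ∑ w : Fin n → ι, (∏ k, p (w k)) * h (wordIter f w x) := by
  induction n generalizing h with
  | zero => simp [wordIter]
  | succ n ih =>
    rw [Function.iterate_succ_apply, ih,
      ← (Fin.snocEquiv fun _ => ι).sum_comp, Fintype.sum_prod_type, Finset.sum_comm]
    refine Finset.sum_congr rfl fun w _ => ?_
    simp only [Fin.snocEquiv, Equiv.coe_fn_mk, markovOp, Finset.mul_sum, Fin.prod_univ_castSucc,
      Fin.snoc_castSucc, Fin.snoc_last, wordIter, Fin.init_snoc]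
    exact Finset.sum_congr rfl fun j _ => by ring

variable {p f} {h : α → ℝ} {B : ℝ}

theorem abs_markovOp_le (hp : ∀ j, 0 ≤ p j) (hpsum : ∑ j, p j = 1) (hB : ∀ x, |h x| ≤ B)
    (x : α) : |markovOp p f h x| ≤ B :=
  abs_weighted_sum_le _ (fun j _ => hp j) hpsum fun _ _ => hB _

theorem abs_markovOp_iterate_le (hp : ∀ j, 0 ≤ p j) (hpsum : ∑ j, p j = 1)
    (hB : ∀ x, |h x| ≤ B) (n : ℕ) (x : α) : |(markovOp p f)^[n] h x| ≤ B :=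
  Function.Iterate.rec (fun g : α → ℝ => ∀ x, |g x| ≤ B) hB (fun _ => abs_markovOp_le hp hpsum)
    n x

end MarkovOperator

theorem ifsIter_eq_wordIter {α : Type*} {N : ℕ} (f : Fin N → α → α) (i : ℕ → Fin N) (n : ℕ)
    (x : α) : ifsIter f i n x = wordIter f (fun k : Fin n => i k) x := by
  induction n with
  | zero => rfl
  | succ n ih => rw [ifsIter, ih]; rfl

instance {T : ℝ} [Fact (0 < T)] : Nontrivial (AddCircle T) :=
  nontrivial_of_ne ((T / 2 : ℝ) : AddCircle T) 0 fun h => by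
    have := AddCircle.norm_half_period_eq (p := T)
    rw [h, norm_zero, abs_of_pos (Fact.out : 0 < T)] at this
    linarith [(Fact.out : 0 < T)]

theorem nonneg_of_abs_sub_le_mul_dist_rpow {X : Type*} [MetricSpace X] [Nontrivial X]
    {h : X → ℝ} {K α : ℝ} (hh : ∀ x y, |h x - h y| ≤ K * dist x y ^ α) : 0 ≤ K := by
  obtain ⟨x, y, hxy⟩ := exists_pair_ne X
  exact nonneg_of_mul_nonneg_left ((abs_nonneg _).trans (hh x y))
    (Real.rpow_pos_of_pos (dist_pos.2 hxy) α)

theorem abs_sub_integral_le {X : Type*} [MeasurableSpace X] {ν : Measure X}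
    [IsProbabilityMeasure ν] {g : X → ℝ} (hg : Integrable g ν) {z : X} {M : ℝ}
    (hM : ∀ x, |g z - g x| ≤ M) : |g z - ∫ x, g x ∂ν| ≤ M := by
  have : g z - ∫ x, g x ∂ν = ∫ x, (g z - g x) ∂ν := by
    rw [integral_sub (integrable_const _) hg, integral_const, probReal_univ, one_smul]
  simpa [this] using norm_integral_le_of_norm_le_const (μ := ν) (f := fun x => g z - g x)
    (ae_of_all _ hM)

theorem IsBernoulli.integral_comp_restrict {N : ℕ} {p : Fin N → ℝ} {P : Measure (ℕ → Fin N)}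
    (hP : IsBernoulli p P) (hp : ∀ j, 0 ≤ p j) (n : ℕ) (G : (Fin n → Fin N) → ℝ) :
    ∫ i, G (fun k : Fin n => i k) ∂P = ∑ w : Fin n → Fin N, (∏ k, p (w k)) * G w := by
  have := hP.1
  have hπ : Measurable fun (i : ℕ → Fin N) (k : Fin n) => i k :=
    measurable_pi_lambda _ fun k => measurable_pi_apply _
  rw [← integral_map hπ.aemeasurable (measurable_of_countable G).aestronglyMeasurable,
    integral_fintype .of_finite]
  refine Finset.sum_congr rfl fun w _ => ?_
  have hcyl : (fun (i : ℕ → Fin N) (k : Fin n) => i k) ⁻¹' {w} =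
      {i | ∀ k : Fin n, i k = w k} := by
    ext i
    simp [funext_iff]
  rw [measureReal_def, Measure.map_apply hπ (measurableSet_singleton w), hcyl, hP.2 n w,
    ENNReal.toReal_prod, smul_eq_mul]
  simp only [ENNReal.toReal_ofReal (hp _)]

theorem abs_markovOp_iterate_sub_le {X : Type*} [PseudoMetricSpace X] {N : ℕ} {p : Fin N → ℝ}
    (hp : ∀ j, 0 ≤ p j) {P : Measure (ℕ → Fin N)} (hP : IsBernoulli p P) (f : Fin N → X → X)
    {h : X → ℝ} {K α : ℝ} (hh : ∀ x y, |h x - h y| ≤ K * dist x y ^ α) (n : ℕ) (x y : X) :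
    |(markovOp p f)^[n] h x - (markovOp p f)^[n] h y| ≤
      K * ∫ i, dist (ifsIter f i n x) (ifsIter f i n y) ^ α ∂P := by
  simp_rw [markovOp_iterate_eq_sum, ifsIter_eq_wordIter]
  rw [hP.integral_comp_restrict hp n fun w => dist (wordIter f w x) (wordIter f w y) ^ α,
    ← Finset.sum_sub_distrib, Finset.mul_sum]
  refine (Finset.abs_sum_le_sum_abs _ _).trans (Finset.sum_le_sum fun w _ => ?_)
  have hw : 0 ≤ ∏ k, p (w k) := Finset.prod_nonneg fun k _ => hp (w k)
  rw [← mul_sub, abs_mul, abs_of_nonneg hw, mul_left_comm]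
  exact mul_le_mul_of_nonneg_left (hh _ _) hw

section Stationarity

variable {X ι : Type*} [MeasurableSpace X] [Fintype ι] {p : ι → ℝ} {f : ι → X → X}
  {h : X → ℝ} {B : ℝ}

theorem measurable_markovOp (hf : ∀ j, Measurable (f j)) (hh : Measurable h) :
    Measurable (markovOp p f h) :=
  Finset.measurable_sum _ fun j _ => (hh.comp (hf j)).const_mul _

theorem measurable_markovOp_iterate (hf : ∀ j, Measurable (f j)) (hh : Measurable h) (n : ℕ) :
    Measurable ((markovOp p f)^[n] h) :=
  Function.Iterate.rec (fun g : X → ℝ => Measurable g) hh (fun _ => measurable_markovOp hf) n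

variable {ν : Measure X} [IsFiniteMeasure ν]

theorem integral_markovOp (hp : ∀ j, 0 ≤ p j) (hf : ∀ j, Measurable (f j))
    (hsta : ν = ∑ j, ENNReal.ofReal (p j) • ν.map (f j)) (hh : Measurable h)
    (hB : ∀ x, |h x| ≤ B) : ∫ x, markovOp p f h x ∂ν = ∫ x, h x ∂ν := by
  have hint : ∀ j, Integrable h (ν.map (f j)) := fun j =>
    .of_bound hh.aestronglyMeasurable B (ae_of_all _ hB)
  have hint_comp : ∀ j, Integrable (fun x => h (f j x)) ν := fun j =>
    .of_bound (hh.comp (hf j)).aestronglyMeasurable B (ae_of_all _ fun x => hB (f j x))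
  conv_rhs => rw [hsta]
  rw [integral_finsetSum_measure fun j _ => (hint j).smul_measure ENNReal.ofReal_ne_top]
  unfold markovOp
  rw [integral_finsetSum _ fun j _ => (hint_comp j).const_mul _]
  refine Finset.sum_congr rfl fun j _ => ?_
  rw [integral_const_mul, integral_smul_measure,
    integral_map (hf j).aemeasurable hh.aestronglyMeasurable, ENNReal.toReal_ofReal (hp j),
    smul_eq_mul]

theorem integral_markovOp_iterate (hp : ∀ j, 0 ≤ p j) (hpsum : ∑ j, p j = 1)
    (hf : ∀ j, Measurable (f j)) (hsta : ν = ∑ j, ENNReal.ofReal (p j) • ν.map (f j))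
    (hh : Measurable h) (hB : ∀ x, |h x| ≤ B) (n : ℕ) :
    ∫ x, (markovOp p f)^[n] h x ∂ν = ∫ x, h x ∂ν := by
  induction n generalizing h with
  | zero => rfl
  | succ n ih =>
    rw [Function.iterate_succ_apply, ih (measurable_markovOp hf hh) (abs_markovOp_le hp hpsum hB),
      integral_markovOp hp hf hsta hh hB]

end Stationarity

theorem Qop_iterate_succ_apply {N : ℕ} (p : Fin N → ℝ) (f : Fin N → UnitAddCircle → UnitAddCircle)
    (φ : Fin N × UnitAddCircle → ℝ) (n : ℕ) (z : Fin N × UnitAddCircle) :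
    (Qop p f)^[n + 1] φ z = (markovOp p f)^[n] (fun x => ∑ i, p i * φ (i, x)) (f z.1 z.2) := by
  have hsemi : Function.Semiconj (fun (h : UnitAddCircle → ℝ) z => h (f z.1 z.2))
      (markovOp p f) (Qop p f) := fun _ => rfl
  rw [Function.iterate_succ_apply]
  exact (congrFun (hsemi.iterate_right n fun x => ∑ i, p i * φ (i, x)) z).symm

theorem stmt18_general {N : ℕ} (f : Fin N → (UnitAddCircle ≃ₜ UnitAddCircle))
    (p : Fin N → ℝ) (hp : ∀ j, 0 ≤ p j) (hpsum : ∑ j, p j = 1)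
    (P : Measure (ℕ → Fin N)) (hP : IsBernoulli p P)
    (ν : Measure UnitAddCircle) (hν : IsProbabilityMeasure ν)
    (hsta : IFSStationary p (fun j => ⇑(f j)) ν)
    (α : ℝ) (lam : ℝ) (hlam : lam ∈ Set.Ioo (0 : ℝ) 1)
    (c : ℝ) (hc : 0 < c)
    (hdecay : ∀ (n : ℕ) (x y : UnitAddCircle),
      (∫ i, (dist (ifsIter (fun j => ⇑(f j)) i n x)
          (ifsIter (fun j => ⇑(f j)) i n y)) ^ α ∂P) ≤ c * lam ^ n) :
    ∃ C > (0 : ℝ), ∀ φ : Fin N × UnitAddCircle → ℝ, Measurable φ →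
      (∃ Cb : ℝ, ∀ z, |φ z| ≤ Cb) →
      ∀ K : ℝ, (∀ (j : Fin N) (x y : UnitAddCircle),
          |φ (j, x) - φ (j, y)| ≤ K * dist x y ^ α) →
        ∀ (n : ℕ) (j : Fin N) (y : UnitAddCircle),
          |(Qop p (fun j => ⇑(f j)))^[n + 1] φ (j, y) -
              ∑ j' : Fin N, p j' * ∫ x, φ (j', x) ∂ν|
            ≤ C * lam ^ (n + 1) * K := by
  have hf : ∀ j, Measurable (f j) := fun j => (f j).continuous.measurable
  refine ⟨c / lam, div_pos hc hlam.1, fun φ hφ ⟨Cb, hCb⟩ K hK n j y => ?_⟩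
  set ψ : UnitAddCircle → ℝ := fun x => ∑ i, p i * φ (i, x)
  have hψ : Measurable ψ :=
    Finset.measurable_sum _ fun i _ => (hφ.comp measurable_prodMk_left).const_mul _
  have hψCb : ∀ x, |ψ x| ≤ Cb := fun x =>
    abs_weighted_sum_le _ (fun i _ => hp i) hpsum fun i _ => hCb _
  have hψK : ∀ x y, |ψ x - ψ y| ≤ K * dist x y ^ α := fun x y => by
    simp only [ψ, ← Finset.sum_sub_distrib, ← mul_sub]
    exact abs_weighted_sum_le _ (fun i _ => hp i) hpsum fun i _ => hK i x y
  have hφν : ∀ i, Integrable (fun x => φ (i, x)) ν := fun i =>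
    .of_bound (hφ.comp measurable_prodMk_left).aestronglyMeasurable Cb
      (ae_of_all _ fun x => hCb _)
  have hmean :
      ∑ i, p i * ∫ x, φ (i, x) ∂ν = ∫ x, (markovOp p (fun j => ⇑(f j)))^[n] ψ x ∂ν := by
    rw [integral_markovOp_iterate hp hpsum hf hsta hψ hψCb,
      integral_finsetSum _ fun i _ => (hφν i).const_mul _]
    simp only [integral_const_mul]
  rw [Qop_iterate_succ_apply, hmean]
  calc _ ≤ K * (c * lam ^ n) := by
        refine abs_sub_integral_le (.of_bound
          (measurable_markovOp_iterate hf hψ n).aestronglyMeasurable Cb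
          (ae_of_all _ (abs_markovOp_iterate_le hp hpsum hψCb n))) fun x => ?_
        exact (abs_markovOp_iterate_sub_le hp hP _ hψK n _ x).trans
          (mul_le_mul_of_nonneg_left (hdecay n _ x) (nonneg_of_abs_sub_le_mul_dist_rpow hψK))
    _ = c / lam * lam ^ (n + 1) * K := by field_simp [hlam.1.ne']; ring

theorem stmt18 {N : ℕ} (f : Fin N → (UnitAddCircle ≃ₜ UnitAddCircle))
    (p : Fin N → ℝ) (hp : ∀ j, 0 ≤ p j) (hpsum : ∑ j, p j = 1)
    (P : Measure (ℕ → Fin N)) (hP : IsBernoulli p P)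
    (ν : Measure UnitAddCircle) (hν : IsProbabilityMeasure ν)
    (hsta : IFSStationary p (fun j => ⇑(f j)) ν)
    (α : ℝ) (hα : α ∈ Set.Ioo (0 : ℝ) 1) (lam : ℝ) (hlam : lam ∈ Set.Ioo (0 : ℝ) 1)
    (c : ℝ) (hc : 0 < c)
    (hdecay : ∀ (n : ℕ) (x y : UnitAddCircle),
      (∫ i, (dist (ifsIter (fun j => ⇑(f j)) i n x)
          (ifsIter (fun j => ⇑(f j)) i n y)) ^ α ∂P) ≤ c * lam ^ n) :
    ∃ C > (0 : ℝ), ∀ φ : Fin N × UnitAddCircle → ℝ, Measurable φ →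
      (∃ Cb : ℝ, ∀ z, |φ z| ≤ Cb) →
      ∀ K : ℝ, (∀ (j : Fin N) (x y : UnitAddCircle),
          |φ (j, x) - φ (j, y)| ≤ K * dist x y ^ α) →
        ∀ (n : ℕ) (j : Fin N) (y : UnitAddCircle),
          |(Qop p (fun j => ⇑(f j)))^[n + 1] φ (j, y) -
              ∑ j' : Fin N, p j' * ∫ x, φ (j', x) ∂ν|
            ≤ C * lam ^ (n + 1) * K :=
  stmt18_general f p hp hpsum P hP ν hν hsta α lam hlam c hc hdecay
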